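/- Fix $n \ge 1$. For indices $1 \le i < j < k \le n$ (boundaries of two adjacent runs $[i,j)$ and $[j,k)$), define the power $p(i,j,k)$ as the smallest positive integer $p$ such that there exists an integer $c$ with $(i+j)/(2n) < c \cdot 2^{-p} \le (j+k)/(2n)$. Then $p(i,j,k) \le \lceil \log_2 n \rceil + 1$. -/
import Mathlib


theorem stmt_5 (n i j k : ℕ) (hn : 1 ≤ n) (hi : 1 ≤ i) (hij : i < j) (hjk : j < k)
    (hkn : k ≤ n) :
    ((sInf {p : ℕ | 0 < p ∧ ∃ c : ℤ,
        ((i : ℝ) + j) / (2 * n) < (c : ℝ) * (2 : ℝ) ^ (-(p : ℤ)) ∧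
        (c : ℝ) * (2 : ℝ) ^ (-(p : ℤ)) ≤ ((j : ℝ) + k) / (2 * n)} : ℕ) : ℤ)
      ≤ ⌈Real.logb 2 n⌉ + 1 := by
  set L := ⌈Real.logb 2 n⌉ with hLdef
  have hn0 : (0 : ℝ) < n := by exact_mod_cast hn
  have hlog0 : 0 ≤ Real.logb 2 n := Real.logb_nonneg (by norm_num) (by exact_mod_cast hn)
  have hL0 : 0 ≤ L := Int.ceil_nonneg hlog0
  have h2L : (n : ℝ) ≤ (2 : ℝ) ^ (L : ℤ) := by
    calc (n : ℝ) = (2 : ℝ) ^ (Real.logb 2 n) :=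
          (Real.rpow_logb (by norm_num) (by norm_num) hn0).symm
      _ ≤ (2 : ℝ) ^ ((L : ℝ)) :=
          Real.rpow_le_rpow_of_exponent_le (by norm_num) (Int.le_ceil _)
      _ = (2 : ℝ) ^ (L : ℤ) := by rw [Real.rpow_intCast]
  set P : ℕ := L.toNat + 1 with hPdef
  have hPL : (P : ℤ) = L + 1 := by
    simp [hPdef, Int.toNat_of_nonneg hL0]
  have h2n : (0 : ℝ) < 2 * n := by positivity
  have hT : (0 : ℝ) < (2 : ℝ) ^ (P : ℤ) := by positivity
  have h2P : 2 * (n : ℝ) ≤ (2 : ℝ) ^ (P : ℤ) := by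
    rw [hPL, zpow_add₀ (by norm_num : (2:ℝ) ≠ 0)]
    nlinarith [h2L]
  have hki : (i : ℝ) + 2 ≤ (k : ℝ) := by
    have : i + 2 ≤ k := by omega
    exact_mod_cast this
  -- the chosen dyadic numerator
  set c : ℤ := ⌊(((j : ℝ) + k) * (2 : ℝ) ^ (P : ℤ)) / (2 * n)⌋ with hcdef
  have hc1 : (c : ℝ) * (2 * n) ≤ ((j : ℝ) + k) * (2 : ℝ) ^ (P : ℤ) :=
    (le_div_iff₀ h2n).mp (Int.floor_le _)
  have hc2 : ((j : ℝ) + k) * (2 : ℝ) ^ (P : ℤ) < ((c : ℝ) + 1) * (2 * n) := by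
    have := Int.lt_floor_add_one ((((j : ℝ) + k) * (2 : ℝ) ^ (P : ℤ)) / (2 * n))
    have := (div_lt_iff₀ h2n).mp this
    exact this
  have hrw : (c : ℝ) * (2 : ℝ) ^ (-(P : ℤ)) = (c : ℝ) / (2 : ℝ) ^ (P : ℤ) := by
    rw [zpow_neg]; ring
  have hmem : P ∈ {p : ℕ | 0 < p ∧ ∃ c : ℤ,
        ((i : ℝ) + j) / (2 * n) < (c : ℝ) * (2 : ℝ) ^ (-(p : ℤ)) ∧
        (c : ℝ) * (2 : ℝ) ^ (-(p : ℤ)) ≤ ((j : ℝ) + k) / (2 * n)} := by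
    refine ⟨Nat.succ_pos _, c, ?_, ?_⟩
    · rw [hrw, div_lt_div_iff₀ h2n hT]
      nlinarith [hc2, h2P, hki, hT]
    · rw [hrw, div_le_div_iff₀ hT h2n]
      nlinarith [hc1]
  have hinf := Nat.sInf_le hmem
  have : ((sInf {p : ℕ | 0 < p ∧ ∃ c : ℤ,
        ((i : ℝ) + j) / (2 * n) < (c : ℝ) * (2 : ℝ) ^ (-(p : ℤ)) ∧
        (c : ℝ) * (2 : ℝ) ^ (-(p : ℤ)) ≤ ((j : ℝ) + k) / (2 * n)} : ℕ) : ℤ) ≤ (P : ℤ) := by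
    exact_mod_cast hinf
  linarith [this, hPL.le]
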